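/- Fix k₀ ∈ ℕ. The assignment A ↦ f_A is injective on subsets A of {n ∈ ℕ : n ≥ k₀ + 2}: if A, B ⊆ {n : n ≥ k₀+2} and f_A and f_B agree as functions on Σ n : ℕ, SimpleGraph (Fin n), then A = B. Moreover, for every such A and every k ≤ k₀, the rows of the restricted connection matrix of f_A (rows and columns indexed by k-graphs on Fin n vertex sets that have no vertices or at least one vertex outside the range of the labeling; entry at (X,Y) equal to f_A of the underlying graph of X ⊔ₖ Y) span an ℝ-subspace of the function space of dimension at most 2. Consequently there are continuum many real-valued graph parameters all of whose restricted connection matrices for k ≤ k₀ have rank at most 2. -/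

import Mathlib

/-- Same-side adjacency on the disjoint union of two graphs. -/
def sumAdj {V₁ V₂ : Type*} (G₁ : SimpleGraph V₁) (G₂ : SimpleGraph V₂) :
    V₁ ⊕ V₂ → V₁ ⊕ V₂ → Prop
  | Sum.inl a, Sum.inl b => G₁.Adj a b
  | Sum.inr a, Sum.inr b => G₂.Adj a b
  | _, _ => False

lemma sumAdj_symm {V₁ V₂ : Type*} (G₁ : SimpleGraph V₁) (G₂ : SimpleGraph V₂)
    {u v : V₁ ⊕ V₂} (h : sumAdj G₁ G₂ u v) : sumAdj G₁ G₂ v u := by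
  cases u <;> cases v <;> simp_all [sumAdj] <;> exact h.symm

/-- The generating relation for gluing two `k`-graphs: identify vertices
carrying the same label. -/
def glueRel {k : ℕ} {V₁ V₂ : Type*} (ℓ₁ : Fin k → Option V₁) (ℓ₂ : Fin k → Option V₂)
    (u v : V₁ ⊕ V₂) : Prop :=
  ∃ (i : Fin k) (v₁ : V₁) (v₂ : V₂),
    ℓ₁ i = some v₁ ∧ ℓ₂ i = some v₂ ∧ u = Sum.inl v₁ ∧ v = Sum.inr v₂

def glueSetoid {k : ℕ} {V₁ V₂ : Type*} (ℓ₁ : Fin k → Option V₁)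
    (ℓ₂ : Fin k → Option V₂) : Setoid (V₁ ⊕ V₂) :=
  Relation.EqvGen.setoid (glueRel ℓ₁ ℓ₂)

/-- The vertex type of the gluing of two `k`-graphs. -/
def GlueVert {k : ℕ} {V₁ V₂ : Type*} (ℓ₁ : Fin k → Option V₁)
    (ℓ₂ : Fin k → Option V₂) : Type _ :=
  Quotient (glueSetoid ℓ₁ ℓ₂)

def glueMk {k : ℕ} {V₁ V₂ : Type*} (ℓ₁ : Fin k → Option V₁)
    (ℓ₂ : Fin k → Option V₂) (u : V₁ ⊕ V₂) : GlueVert ℓ₁ ℓ₂ :=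
  Quotient.mk (glueSetoid ℓ₁ ℓ₂) u

/-- The underlying graph of the gluing of two `k`-graphs. -/
def glueGraph {k : ℕ} {V₁ V₂ : Type*} (G₁ : SimpleGraph V₁) (ℓ₁ : Fin k → Option V₁)
    (G₂ : SimpleGraph V₂) (ℓ₂ : Fin k → Option V₂) :
    SimpleGraph (GlueVert ℓ₁ ℓ₂) where
  Adj x y := x ≠ y ∧ ∃ u v : V₁ ⊕ V₂,
    glueMk ℓ₁ ℓ₂ u = x ∧ glueMk ℓ₁ ℓ₂ v = y ∧ sumAdj G₁ G₂ u v
  symm := ⟨fun x y ⟨hne, u, v, hu, hv, h⟩ => ⟨hne.symm, v, u, hv, hu, sumAdj_symm G₁ G₂ h⟩⟩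
  loopless := ⟨fun x h => h.1 rfl⟩

/-- The labeling of the gluing of two `k`-graphs. -/
def glueLabel {k : ℕ} {V₁ V₂ : Type*} (ℓ₁ : Fin k → Option V₁)
    (ℓ₂ : Fin k → Option V₂) (i : Fin k) : Option (GlueVert ℓ₁ ℓ₂) :=
  match ℓ₁ i with
  | some v => some (glueMk ℓ₁ ℓ₂ (Sum.inl v))
  | none => (ℓ₂ i).map fun v => glueMk ℓ₁ ℓ₂ (Sum.inr v)

noncomputable instance {k : ℕ} {V₁ V₂ : Type*} [Fintype V₁] [Fintype V₂]
    (ℓ₁ : Fin k → Option V₁) (ℓ₂ : Fin k → Option V₂) : Fintype (GlueVert ℓ₁ ℓ₂) := by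
  classical exact Quotient.fintype (glueSetoid ℓ₁ ℓ₂)

/-- A graph is `m`-connected if it has more than `m` vertices and removing any
fewer than `m` vertices leaves it connected. -/
def IsMConnected {V : Type*} [Fintype V] (m : ℕ) (G : SimpleGraph V) : Prop :=
  m < Fintype.card V ∧ ∀ S : Set V, S.ncard < m → (G.induce Sᶜ).Connected

open Classical in
/-- The graph parameter `f_A`: the number of vertices if the graph is
`(k₀+1)`-connected with number of vertices in `A`, and `0` otherwise. -/
noncomputable def fA (k₀ : ℕ) (A : Set ℕ) {V : Type*} [Fintype V] (G : SimpleGraph V) : ℝ :=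
  if IsMConnected (k₀ + 1) G ∧ Fintype.card V ∈ A then (Fintype.card V : ℝ) else 0

/-- `k`-graphs on vertex sets `Fin n` that have no vertices or at least one
vertex outside the range of the labeling. -/
def Idx (k : ℕ) :=
  {X : Σ n : ℕ, SimpleGraph (Fin n) × (Fin k → Option (Fin n)) //
    X.1 = 0 ∨ ∃ v : Fin X.1, ∀ i : Fin k, X.2.2 i ≠ some v}

/-- Transport a graph on a finite vertex type to a graph on `Fin n`. -/
noncomputable def toFinGraph {V : Type} [Fintype V] (G : SimpleGraph V) :
    Σ n : ℕ, SimpleGraph (Fin n) :=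
  ⟨Fintype.card V, G.map (Fintype.equivFin V).toEmbedding⟩

/-!
If two `k`-graphs both have an unlabeled vertex, then in their gluing the at most `k` labeled
vertices separate the unlabeled vertices coming from the first graph from those coming from the
second, since every edge lies inside one side. So for `k ≤ k₀` the glued graph is never
`(k₀ + 1)`-connected and `f_A` vanishes on it: the restricted connection matrix is zero outside
the row and column of the empty `k`-graph, hence has rank at most `2`. On the other hand the
complete graph on `n ≥ k₀ + 2` vertices is `(k₀ + 1)`-connected, so `f_A` detects whether
`n ∈ A`, and `A ↦ f_A` is injective on the `2 ^ ℵ₀` subsets of `{n | n ≥ k₀ + 2}`.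
-/

theorem SimpleGraph.Reachable.imp_of_adj {V : Type*} {G : SimpleGraph V} {u v : V}
    (h : G.Reachable u v) {p : V → Prop} (hp : ∀ ⦃x y⦄, G.Adj x y → p x → p y) (hu : p u) :
    p v := by
  obtain ⟨w⟩ := h
  induction w with
  | nil => exact hu
  | cons had _ ih => exact ih (hp had hu)

theorem rank_span_range_le_two {R ι : Type*} [Ring R] [StrongRankCondition R]
    (w : ι → ι → R) (i₀ : ι) (hw : ∀ i j, i ≠ i₀ → j ≠ i₀ → w i j = 0) :
    Module.rank R (Submodule.span R (Set.range w)) ≤ 2 := by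
  classical
  have hrow : ∀ i, i ≠ i₀ → w i = w i i₀ • Pi.single i₀ 1 := by
    intro i hi
    funext j
    by_cases hj : j = i₀
    · subst hj; simp
    · simp [hw i j hi hj, hj]
  have hspan : Submodule.span R (Set.range w) ≤ Submodule.span R {w i₀, Pi.single i₀ 1} := by
    rw [Submodule.span_le]
    rintro - ⟨i, rfl⟩
    by_cases hi : i = i₀
    · exact Submodule.subset_span (by simp [hi])
    · rw [hrow i hi]
      exact Submodule.smul_mem _ _ (Submodule.subset_span (by simp))
  calc Module.rank R (Submodule.span R (Set.range w))
      ≤ Module.rank R (Submodule.span R {w i₀, Pi.single i₀ 1}) := Submodule.rank_mono hspan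
    _ ≤ Cardinal.mk ({w i₀, Pi.single i₀ 1} : Set (ι → R)) := rank_span_le _
    _ ≤ 2 := (Cardinal.mk_insert_le ..).trans (by rw [Cardinal.mk_singleton, one_add_one_eq_two])

section Gluing

variable {k : ℕ} {V₁ V₂ : Type*} {ℓ₁ : Fin k → Option V₁} {ℓ₂ : Fin k → Option V₂}

def IsLabeled (ℓ₁ : Fin k → Option V₁) (ℓ₂ : Fin k → Option V₂) : V₁ ⊕ V₂ → Prop :=
  Sum.elim (fun a => ∃ i, ℓ₁ i = some a) (fun b => ∃ i, ℓ₂ i = some b)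

theorem eqvGen_glueRel_eq_or_isLabeled {u v : V₁ ⊕ V₂}
    (h : Relation.EqvGen (glueRel ℓ₁ ℓ₂) u v) :
    u = v ∨ (IsLabeled ℓ₁ ℓ₂ u ∧ IsLabeled ℓ₁ ℓ₂ v) := by
  induction h with
  | rel u v h =>
    obtain ⟨i, v₁, v₂, h₁, h₂, rfl, rfl⟩ := h
    exact Or.inr ⟨⟨i, h₁⟩, ⟨i, h₂⟩⟩
  | refl u => exact Or.inl rfl
  | symm u v _ ih => exact ih.imp Eq.symm And.symm
  | trans u v w _ _ ih₁ ih₂ =>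
    rcases ih₁ with rfl | ⟨hu, hv⟩
    · exact ih₂
    · rcases ih₂ with rfl | ⟨-, hw⟩
      exacts [Or.inr ⟨hu, hv⟩, Or.inr ⟨hu, hw⟩]

theorem isLabeled_of_glueMk_eq_of_ne {u v : V₁ ⊕ V₂} (h : glueMk ℓ₁ ℓ₂ u = glueMk ℓ₁ ℓ₂ v)
    (hne : u ≠ v) : IsLabeled ℓ₁ ℓ₂ u :=
  ((eqvGen_glueRel_eq_or_isLabeled (Quotient.exact h)).resolve_left hne).1

variable (ℓ₁ ℓ₂) in
def labeledClasses : Set (GlueVert ℓ₁ ℓ₂) := {c | ∃ i, glueLabel ℓ₁ ℓ₂ i = some c}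

variable (ℓ₁ ℓ₂) in
theorem ncard_labeledClasses_le : (labeledClasses ℓ₁ ℓ₂).ncard ≤ k :=
  calc (labeledClasses ℓ₁ ℓ₂).ncard
      ≤ (Set.range (glueLabel ℓ₁ ℓ₂)).ncard :=
        Set.ncard_le_ncard_of_injOn some (fun _ ⟨i, hi⟩ => ⟨i, hi⟩)
          (Option.some_injective _).injOn (Set.finite_range _)
    _ ≤ Nat.card (Fin k) := Finite.card_range_le _
    _ = k := Nat.card_fin k

theorem glueMk_inl_eq_glueMk_inr {i : Fin k} {a : V₁} {b : V₂} (ha : ℓ₁ i = some a)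
    (hb : ℓ₂ i = some b) : glueMk ℓ₁ ℓ₂ (.inl a) = glueMk ℓ₁ ℓ₂ (.inr b) :=
  Quotient.sound (Relation.EqvGen.rel _ _ ⟨i, a, b, ha, hb, rfl, rfl⟩)

theorem IsLabeled.of_glueMk_eq {u v : V₁ ⊕ V₂} (hu : IsLabeled ℓ₁ ℓ₂ u)
    (h : glueMk ℓ₁ ℓ₂ u = glueMk ℓ₁ ℓ₂ v) : IsLabeled ℓ₁ ℓ₂ v :=
  (eqvGen_glueRel_eq_or_isLabeled (Quotient.exact h)).elim (· ▸ hu) And.right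

theorem glueMk_mem_labeledClasses_iff {u : V₁ ⊕ V₂} :
    glueMk ℓ₁ ℓ₂ u ∈ labeledClasses ℓ₁ ℓ₂ ↔ IsLabeled ℓ₁ ℓ₂ u := by
  constructor
  · rintro ⟨i, hi⟩
    unfold glueLabel at hi
    rcases h₁ : ℓ₁ i with _ | a
    · rcases h₂ : ℓ₂ i with _ | b
      · simp [h₁, h₂] at hi
      · simp only [h₁, h₂, Option.map_some, Option.some_inj] at hi
        exact IsLabeled.of_glueMk_eq (u := .inr b) ⟨i, h₂⟩ hi
    · simp only [h₁, Option.some_inj] at hi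
      exact IsLabeled.of_glueMk_eq (u := .inl a) ⟨i, h₁⟩ hi
  · rcases u with a | b
    · rintro ⟨i, hi⟩
      exact ⟨i, by simp [glueLabel, hi]⟩
    · rintro ⟨i, hi⟩
      refine ⟨i, ?_⟩
      rcases h₁ : ℓ₁ i with _ | a
      · simp [glueLabel, h₁, hi]
      · simp [glueLabel, h₁, glueMk_inl_eq_glueMk_inr h₁ hi]

variable {G₁ : SimpleGraph V₁} {G₂ : SimpleGraph V₂}

theorem exists_glueMk_inl_of_glueGraph_adj {x y : GlueVert ℓ₁ ℓ₂}
    (hxy : (glueGraph G₁ ℓ₁ G₂ ℓ₂).Adj x y) (hx : x ∉ labeledClasses ℓ₁ ℓ₂)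
    (hx_inl : ∃ a, glueMk ℓ₁ ℓ₂ (.inl a) = x) : ∃ b, glueMk ℓ₁ ℓ₂ (.inl b) = y := by
  obtain ⟨-, u, v, rfl, rfl, huv⟩ := hxy
  obtain ⟨a, ha⟩ := hx_inl
  rcases u with u | u <;> rcases v with v | v <;> simp only [sumAdj] at huv
  · exact ⟨v, rfl⟩
  · exact absurd (glueMk_mem_labeledClasses_iff.2
      (isLabeled_of_glueMk_eq_of_ne ha.symm Sum.inr_ne_inl)) hx

theorem not_isMConnected_glueGraph [Fintype V₁] [Fintype V₂] {m : ℕ} (hkm : k < m)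
    {a : V₁} (ha : ∀ i, ℓ₁ i ≠ some a) {b : V₂} (hb : ∀ i, ℓ₂ i ≠ some b) :
    ¬ IsMConnected m (glueGraph G₁ ℓ₁ G₂ ℓ₂) := by
  rintro ⟨-, hconn⟩
  set S := labeledClasses ℓ₁ ℓ₂
  have haS : glueMk ℓ₁ ℓ₂ (.inl a) ∈ Sᶜ := fun h => by
    obtain ⟨i, hi⟩ := glueMk_mem_labeledClasses_iff.1 h
    exact ha i hi
  have hbS : glueMk ℓ₁ ℓ₂ (.inr b) ∈ Sᶜ := fun h => by
    obtain ⟨i, hi⟩ := glueMk_mem_labeledClasses_iff.1 h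
    exact hb i hi
  have hreach := (hconn S ((ncard_labeledClasses_le ℓ₁ ℓ₂).trans_lt hkm)).preconnected
    ⟨_, haS⟩ ⟨_, hbS⟩
  obtain ⟨a', ha'⟩ := hreach.imp_of_adj (p := fun x => ∃ a', glueMk ℓ₁ ℓ₂ (.inl a') = x.1)
    (fun x _ hxy hx => exists_glueMk_inl_of_glueGraph_adj hxy x.2 hx) ⟨a, rfl⟩
  obtain ⟨i, hi⟩ := isLabeled_of_glueMk_eq_of_ne ha'.symm Sum.inr_ne_inl
  exact hb i hi

end Gluing

section Parameter

variable {V W : Type*} [Fintype V] [Fintype W] {G : SimpleGraph V} {H : SimpleGraph W}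

theorem IsMConnected.of_iso {m : ℕ} (e : G ≃g H) (hG : IsMConnected m G) :
    IsMConnected m H := by
  refine ⟨(Fintype.card_congr e.toEquiv).symm ▸ hG.1, fun S hS => ?_⟩
  have hcard : (e ⁻¹' S).ncard = S.ncard :=
    Set.ncard_preimage_of_injective_subset_range e.injective (by simp [e.surjective.range_eq])
  have iso : G.induce (e ⁻¹' S)ᶜ ≃g H.induce Sᶜ :=
    { toEquiv := e.toEquiv.subtypeEquiv fun v => by simp
      map_rel_iff' := e.map_rel_iff }
  exact iso.connected_iff.1 (hG.2 _ (hcard ▸ hS))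

theorem isMConnected_congr {m : ℕ} (e : G ≃g H) : IsMConnected m G ↔ IsMConnected m H :=
  ⟨.of_iso e, .of_iso e.symm⟩

theorem fA_congr (k₀ : ℕ) (A : Set ℕ) (e : G ≃g H) : fA k₀ A G = fA k₀ A H := by
  unfold fA
  rw [Fintype.card_congr e.toEquiv]
  congr 2
  exact propext (isMConnected_congr e)

theorem fA_toFinGraph (k₀ : ℕ) (A : Set ℕ) {V : Type} [Fintype V] (G : SimpleGraph V) :
    fA k₀ A (toFinGraph G).2 = fA k₀ A G :=
  (fA_congr k₀ A (SimpleGraph.Iso.map _ G)).symm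

theorem isMConnected_top {m : ℕ} (h : m < Fintype.card V) :
    IsMConnected m (⊤ : SimpleGraph V) := by
  refine ⟨h, fun S hS => ?_⟩
  have : Nonempty ↥Sᶜ := Set.nonempty_compl.2 (by
    rintro rfl
    rw [Set.ncard_univ, Nat.card_eq_fintype_card] at hS
    omega) |>.to_subtype
  rw [SimpleGraph.induce_top]
  exact SimpleGraph.connected_top

theorem fA_top_ne_zero_iff {k₀ : ℕ} (A : Set ℕ) (h : k₀ + 2 ≤ Fintype.card V) :
    fA k₀ A (⊤ : SimpleGraph V) ≠ 0 ↔ Fintype.card V ∈ A := by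
  simp only [fA, isMConnected_top (show k₀ + 1 < Fintype.card V by omega), true_and, ne_eq,
    ite_eq_right_iff, Nat.cast_eq_zero, Classical.not_imp, and_iff_left_iff_imp]
  omega

theorem fA_injOn (k₀ : ℕ) :
    Set.InjOn (fun A (p : Σ n : ℕ, SimpleGraph (Fin n)) => fA k₀ A p.2)
      (𝒫 {n : ℕ | k₀ + 2 ≤ n}) := by
  intro A hA B hB hAB
  ext n
  by_cases hn : k₀ + 2 ≤ n
  · have hcard : k₀ + 2 ≤ Fintype.card (Fin n) := by simpa using hn
    have htop := congrFun hAB ⟨n, ⊤⟩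
    rw [← Fintype.card_fin n, ← fA_top_ne_zero_iff A hcard, ← fA_top_ne_zero_iff B hcard]
    exact Iff.of_eq (congrArg (· ≠ 0) htop)
  · exact iff_of_false (fun h => hn (hA h)) (fun h => hn (hB h))

end Parameter

def Idx.empty (k : ℕ) : Idx k := ⟨⟨0, ⊥, fun _ => none⟩, Or.inl rfl⟩

theorem Idx.exists_unlabeled {k : ℕ} {X : Idx k} (hX : X ≠ Idx.empty k) :
    ∃ v, ∀ i, X.1.2.2 i ≠ some v := by
  obtain ⟨⟨n, G, ℓ⟩, hX'⟩ := X
  refine hX'.resolve_left fun (h : n = 0) => hX ?_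
  subst h
  have hG : G = ⊥ := Subsingleton.elim _ _
  have hℓ : ℓ = fun _ => none := Subsingleton.elim _ _
  subst hG hℓ
  rfl

theorem fA_glueGraph_eq_zero {k k₀ : ℕ} (hk : k ≤ k₀) (A : Set ℕ) {X Y : Idx k}
    (hX : X ≠ Idx.empty k) (hY : Y ≠ Idx.empty k) :
    fA k₀ A (glueGraph X.1.2.1 X.1.2.2 Y.1.2.1 Y.1.2.2) = 0 := by
  obtain ⟨a, ha⟩ := Idx.exists_unlabeled hX
  obtain ⟨b, hb⟩ := Idx.exists_unlabeled hY
  rw [fA, if_neg fun h => not_isMConnected_glueGraph (Nat.lt_succ_of_le hk) ha hb h.1]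

/-- `A ↦ f_A` is injective on subsets of `{n | n ≥ k₀ + 2}`; for each such `A`
and `k ≤ k₀` the rows of the restricted connection matrix of `f_A` span a
subspace of dimension at most `2`; consequently there are continuum many
real-valued graph parameters all of whose restricted connection matrices for
`k ≤ k₀` have rank at most `2`. -/
theorem fA_injective_rank_le_two_continuum (k₀ : ℕ) :
    (∀ A B : Set ℕ, A ⊆ {n : ℕ | k₀ + 2 ≤ n} → B ⊆ {n : ℕ | k₀ + 2 ≤ n} →
      (∀ p : Σ n : ℕ, SimpleGraph (Fin n), fA k₀ A p.2 = fA k₀ B p.2) → A = B) ∧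
    (∀ A : Set ℕ, A ⊆ {n : ℕ | k₀ + 2 ≤ n} → ∀ k : ℕ, k ≤ k₀ →
      Module.rank ℝ
        ↥(Submodule.span ℝ (Set.range (fun X : Idx k =>
          fun Y : Idx k => fA k₀ A (glueGraph X.1.2.1 X.1.2.2 Y.1.2.1 Y.1.2.2)))) ≤ 2) ∧
    (∃ P : Set ((Σ n : ℕ, SimpleGraph (Fin n)) → ℝ),
      Cardinal.mk P = Cardinal.continuum ∧
      ∀ f ∈ P, ∀ k : ℕ, k ≤ k₀ →
        Module.rank ℝ
          ↥(Submodule.span ℝ (Set.range (fun X : Idx k =>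
            fun Y : Idx k =>
              f (toFinGraph (glueGraph X.1.2.1 X.1.2.2 Y.1.2.1 Y.1.2.2))))) ≤ 2) := by
  refine ⟨fun A B hA hB h => fA_injOn k₀ hA hB (funext h),
    fun A _ k hk => rank_span_range_le_two _ (Idx.empty k) fun X Y hX hY =>
      fA_glueGraph_eq_zero hk A hX hY, ?_⟩
  refine ⟨(fun A (p : Σ n : ℕ, SimpleGraph (Fin n)) => fA k₀ A p.2) '' 𝒫 {n | k₀ + 2 ≤ n},
    ?_, ?_⟩
  · have : Infinite {n : ℕ | k₀ + 2 ≤ n} := (Set.Ici_infinite (k₀ + 2)).to_subtype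
    rw [Cardinal.mk_image_eq_of_injOn _ _ (fA_injOn k₀), Cardinal.mk_powerset,
      Cardinal.mk_eq_aleph0, Cardinal.two_power_aleph0]
  · rintro - ⟨A, -, rfl⟩ k hk
    exact rank_span_range_le_two _ (Idx.empty k) fun X Y hX hY =>
      (fA_toFinGraph k₀ A _).trans (fA_glueGraph_eq_zero hk A hX hY)
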